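/- arXiv:1109.6463 — 4 statements merged into one kernel-verified Lean document; each statement's English description precedes it below -/
import Mathlib

section
/- Let ν be a probability measure on ℝ and let K > 0 be such that Im s(z; ν) ≤ K for all z ∈ ℂ with Im z > 0. Then ν is absolutely continuous with respect to Lebesgue measure and its Radon–Nikodym density is bounded above by K/π Lebesgue-almost everywhere. -/
/-!
`Im s(x + iε; ν) = ∫ ε / ((t - x)² + ε²) dν(t)` is a Poisson integral of `ν`. Integrating it
in `x` over `(a, b)` and using Tonelli gives
`∫ (arctan ((b - t) / ε) - arctan ((a - t) / ε)) dν(t) ≤ K (b - a)`, and as `ε → 0⁺` the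
integrand tends to `π` on `(a, b)`, so Fatou's lemma yields `π ν(a, b) ≤ K (b - a)`. Through
the construction of Lebesgue measure as an outer measure, this interval bound gives
`ν ≤ (K / π) • volume`, whence absolute continuity and the bound on the density.
-/

open MeasureTheory
open scoped ENNReal

noncomputable section

/-- The Cauchy–Stieltjes transform `s(z; ν) = ∫ (x - z)⁻¹ dν(x)`. -/
def stieltjesTransform (ν : Measure ℝ) (z : ℂ) : ℂ := ∫ x, ((x : ℂ) - z)⁻¹ ∂ν

open Set Real Filter Topology

/-- `π` times the Poisson kernel of the upper half-plane. -/
def halfPlanePoissonKernel (ε x : ℝ) : ℝ := ε / (x ^ 2 + ε ^ 2)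

lemma measurable_halfPlanePoissonKernel (ε : ℝ) : Measurable (halfPlanePoissonKernel ε) := by
  unfold halfPlanePoissonKernel
  fun_prop

lemma continuous_halfPlanePoissonKernel {ε : ℝ} (hε : 0 < ε) :
    Continuous (halfPlanePoissonKernel ε) :=
  continuous_const.div (by fun_prop) fun x => by positivity

lemma halfPlanePoissonKernel_nonneg {ε : ℝ} (hε : 0 ≤ ε) (x : ℝ) :
    0 ≤ halfPlanePoissonKernel ε x := by
  unfold halfPlanePoissonKernel
  positivity

lemma halfPlanePoissonKernel_le_inv {ε : ℝ} (hε : 0 < ε) (x : ℝ) :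
    halfPlanePoissonKernel ε x ≤ ε⁻¹ := by
  rw [halfPlanePoissonKernel, div_le_iff₀ (by positivity)]
  field_simp
  nlinarith [sq_nonneg x]

lemma integrable_halfPlanePoissonKernel (ν : Measure ℝ) [IsFiniteMeasure ν] {ε : ℝ}
    (hε : 0 < ε) (x : ℝ) : Integrable (fun t => halfPlanePoissonKernel ε (t - x)) ν := by
  refine (integrable_const ε⁻¹).mono'
    ((measurable_halfPlanePoissonKernel ε).comp (measurable_sub_const x)).aestronglyMeasurable
    (Eventually.of_forall fun t => ?_)
  rw [Real.norm_of_nonneg (halfPlanePoissonKernel_nonneg hε.le _)]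
  exact halfPlanePoissonKernel_le_inv hε _

lemma intervalIntegral_halfPlanePoissonKernel {ε : ℝ} (hε : 0 < ε) (t a b : ℝ) :
    ∫ x in a..b, halfPlanePoissonKernel ε (t - x)
      = arctan ((b - t) / ε) - arctan ((a - t) / ε) := by
  have hkernel : ∀ x, halfPlanePoissonKernel ε (t - x) = ε⁻¹ * (1 + ((x - t) / ε) ^ 2)⁻¹ := by
    intro x
    rw [halfPlanePoissonKernel]
    field_simp
    ring
  simp only [hkernel, intervalIntegral.integral_const_mul,
    intervalIntegral.integral_comp_sub_right (fun x => (1 + (x / ε) ^ 2)⁻¹),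
    intervalIntegral.integral_comp_div (fun x => (1 + x ^ 2)⁻¹) hε.ne', integral_inv_one_add_sq,
    smul_eq_mul]
  field_simp

lemma im_inv_ofReal_sub_add_mul_I (t x ε : ℝ) :
    ((t - (x + ε * Complex.I) : ℂ)⁻¹).im = halfPlanePoissonKernel ε (t - x) := by
  simp [halfPlanePoissonKernel, Complex.inv_im, Complex.normSq_apply]
  ring

lemma integrable_inv_ofReal_sub (ν : Measure ℝ) [IsFiniteMeasure ν] {z : ℂ} (hz : 0 < z.im) :
    Integrable (fun t : ℝ => ((t : ℂ) - z)⁻¹) ν := by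
  have hz_le : ∀ t : ℝ, z.im ≤ ‖(t : ℂ) - z‖ := fun t =>
    (le_abs_self _).trans (by simpa using Complex.abs_im_le_norm ((t : ℂ) - z))
  have hne : ∀ t : ℝ, (t : ℂ) - z ≠ 0 := fun t h => by
    simpa [h] using hz.trans_le (hz_le t)
  refine (integrable_const z.im⁻¹).mono' ?_ (Eventually.of_forall fun t => ?_)
  · exact ((Complex.continuous_ofReal.sub continuous_const).inv₀ hne).aestronglyMeasurable
  · rw [norm_inv]
    exact inv_anti₀ hz (hz_le t)

lemma im_stieltjesTransform (ν : Measure ℝ) [IsFiniteMeasure ν] (x : ℝ) {ε : ℝ} (hε : 0 < ε) :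
    (stieltjesTransform ν (x + ε * Complex.I)).im
      = ∫ t, halfPlanePoissonKernel ε (t - x) ∂ν := by
  have h := integral_im (𝕜 := ℂ) (integrable_inv_ofReal_sub ν (z := x + ε * Complex.I)
    (by simpa using hε))
  simp only [RCLike.im_to_complex, im_inv_ofReal_sub_add_mul_I] at h
  rw [stieltjesTransform, h]

lemma lintegral_arctan_sub_le_of_lintegral_halfPlanePoissonKernel_le (ν : Measure ℝ)
    [SFinite ν] {M : ℝ≥0∞} {ε : ℝ} (hε : 0 < ε)
    (h : ∀ x, ∫⁻ t, ENNReal.ofReal (halfPlanePoissonKernel ε (t - x)) ∂ν ≤ M)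
    {a b : ℝ} (hab : a ≤ b) :
    ∫⁻ t, ENNReal.ofReal (arctan ((b - t) / ε) - arctan ((a - t) / ε)) ∂ν
      ≤ M * ENNReal.ofReal (b - a) := by
  have harctan : ∀ t, ENNReal.ofReal (arctan ((b - t) / ε) - arctan ((a - t) / ε))
      = ∫⁻ x in Ioc a b, ENNReal.ofReal (halfPlanePoissonKernel ε (t - x)) := fun t => by
    have hint : IntegrableOn (fun x => halfPlanePoissonKernel ε (t - x)) (Ioc a b) :=
      ((continuous_halfPlanePoissonKernel hε).comp (continuous_sub_left t)).integrableOn_Ioc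
    rw [← ofReal_integral_eq_lintegral_ofReal hint
        (Eventually.of_forall fun x => halfPlanePoissonKernel_nonneg hε.le _),
      ← intervalIntegral.integral_of_le hab, intervalIntegral_halfPlanePoissonKernel hε]
  have hmeas : Measurable
      (Function.uncurry fun t x => ENNReal.ofReal (halfPlanePoissonKernel ε (t - x))) :=
    ENNReal.measurable_ofReal.comp ((measurable_halfPlanePoissonKernel ε).comp measurable_sub)
  calc ∫⁻ t, ENNReal.ofReal (arctan ((b - t) / ε) - arctan ((a - t) / ε)) ∂ν
      = ∫⁻ x in Ioc a b, ∫⁻ t, ENNReal.ofReal (halfPlanePoissonKernel ε (t - x)) ∂ν := by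
        simp only [harctan]
        exact lintegral_lintegral_swap hmeas.aemeasurable
    _ ≤ ∫⁻ _ in Ioc a b, M := lintegral_mono h
    _ = M * ENNReal.ofReal (b - a) := by rw [setLIntegral_const, Real.volume_Ioc]

lemma tendsto_arctan_sub_nhdsGT_zero {a b t : ℝ} (ht : t ∈ Ioo a b) :
    Tendsto (fun ε => arctan ((b - t) / ε) - arctan ((a - t) / ε)) (𝓝[>] 0) (𝓝 π) := by
  have hb : Tendsto (fun ε => arctan ((b - t) / ε)) (𝓝[>] 0) (𝓝 (π / 2)) := by
    refine (tendsto_arctan_atTop.mono_right nhdsWithin_le_nhds).comp ?_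
    exact (tendsto_inv_nhdsGT_zero.const_mul_atTop (sub_pos.2 ht.2)).congr fun ε =>
      (div_eq_mul_inv _ _).symm
  have ha : Tendsto (fun ε => arctan ((a - t) / ε)) (𝓝[>] 0) (𝓝 (-(π / 2))) := by
    refine (tendsto_arctan_atBot.mono_right nhdsWithin_le_nhds).comp ?_
    exact (tendsto_inv_nhdsGT_zero.const_mul_atTop_of_neg (sub_neg.2 ht.1)).congr fun ε =>
      (div_eq_mul_inv _ _).symm
  simpa only [sub_neg_eq_add, add_halves] using hb.sub ha

lemma pi_mul_measure_Ioo_le_of_lintegral_halfPlanePoissonKernel_le (ν : Measure ℝ)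
    [SFinite ν] {M : ℝ≥0∞}
    (h : ∀ ε > 0, ∀ x, ∫⁻ t, ENNReal.ofReal (halfPlanePoissonKernel ε (t - x)) ∂ν ≤ M) (a b : ℝ) :
    ENNReal.ofReal π * ν (Ioo a b) ≤ M * ENNReal.ofReal (b - a) := by
  rcases le_or_gt b a with hba | hab
  · simp [Ioo_eq_empty_of_le hba]
  set g : ℝ → ℝ → ℝ≥0∞ := fun ε t => ENNReal.ofReal (arctan ((b - t) / ε) - arctan ((a - t) / ε))
  have hg : ∀ ε, Measurable (g ε) := fun ε => by fun_prop
  calc ENNReal.ofReal π * ν (Ioo a b)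
      = ∫⁻ _ in Ioo a b, ENNReal.ofReal π ∂ν := by rw [setLIntegral_const, mul_comm]
    _ ≤ ∫⁻ t in Ioo a b, liminf (fun ε => g ε t) (𝓝[>] 0) ∂ν :=
        setLIntegral_mono' measurableSet_Ioo fun t ht =>
          ((ENNReal.tendsto_ofReal (tendsto_arctan_sub_nhdsGT_zero ht)).liminf_eq).ge
    _ ≤ ∫⁻ t, liminf (fun ε => g ε t) (𝓝[>] 0) ∂ν := setLIntegral_le_lintegral _ _
    _ ≤ liminf (fun ε => ∫⁻ t, g ε t ∂ν) (𝓝[>] 0) := lintegral_liminf_le hg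
    _ ≤ M * ENNReal.ofReal (b - a) :=
        liminf_le_of_frequently_le' (Eventually.frequently (eventually_nhdsWithin_of_forall
          fun ε hε =>
            lintegral_arctan_sub_le_of_lintegral_halfPlanePoissonKernel_le ν hε (h ε hε) hab.le))

lemma measure_Ioo_le_of_im_stieltjesTransform_le (ν : Measure ℝ) [IsFiniteMeasure ν] {K : ℝ}
    (h : ∀ z : ℂ, 0 < z.im → (stieltjesTransform ν z).im ≤ K) (a b : ℝ) :
    ν (Ioo a b) ≤ ENNReal.ofReal (K / π) * ENNReal.ofReal (b - a) := by
  have hpoisson : ∀ ε > 0, ∀ x,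
      ∫⁻ t, ENNReal.ofReal (halfPlanePoissonKernel ε (t - x)) ∂ν ≤ ENNReal.ofReal K := by
    intro ε hε x
    rw [← ofReal_integral_eq_lintegral_ofReal (integrable_halfPlanePoissonKernel ν hε x)
      (Eventually.of_forall fun t => halfPlanePoissonKernel_nonneg hε.le _),
      ← im_stieltjesTransform ν x hε]
    exact ENNReal.ofReal_le_ofReal (h _ (by simpa using hε))
  have hpi := pi_mul_measure_Ioo_le_of_lintegral_halfPlanePoissonKernel_le ν hpoisson a b
  rw [ENNReal.ofReal_div_of_pos pi_pos, ENNReal.div_eq_inv_mul, mul_assoc]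
  exact (ENNReal.mul_le_iff_le_inv (ENNReal.ofReal_pos.2 pi_pos).ne' ENNReal.ofReal_ne_top).1 hpi

lemma measure_Ioc_le_of_measure_Ioo_le {ν : Measure ℝ} {c : ℝ≥0∞} (hc : c ≠ ∞)
    (h : ∀ a b, ν (Ioo a b) ≤ c * ENNReal.ofReal (b - a)) (a b : ℝ) :
    ν (Ioc a b) ≤ c * ENNReal.ofReal (b - a) := by
  have hlim : Tendsto (fun d => c * ENNReal.ofReal (d - a)) (𝓝[>] b)
      (𝓝 (c * ENNReal.ofReal (b - a))) :=
    ((ENNReal.continuous_const_mul hc).comp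
      (ENNReal.continuous_ofReal.comp (continuous_sub_right a))).continuousWithinAt
  exact ge_of_tendsto hlim (eventually_nhdsWithin_of_forall fun d hd =>
    (measure_mono (Ioc_subset_Ioo_right hd)).trans (h a d))

lemma le_smul_volume_of_measure_Ioc_le {ν : Measure ℝ} {c : ℝ≥0∞} (hc₀ : c ≠ 0) (hc : c ≠ ∞)
    (h : ∀ a b, ν (Ioc a b) ≤ c * ENNReal.ofReal (b - a)) : ν ≤ c • volume := by
  have hlength : ∀ s, ν s ≤ c * StieltjesFunction.id.length s := fun s => by
    simp only [StieltjesFunction.length_eq, ENNReal.mul_iInf_of_ne hc₀ hc]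
    exact le_iInf₂ fun a b => le_iInf fun hs =>
      (measure_mono fun x hx => hs ⟨hx, not_isBot x⟩).trans (h a b)
  have houter : ν.toOuterMeasure ≤ c • StieltjesFunction.id.outer := by
    rw [StieltjesFunction.outer, OuterMeasure.smul_ofFunction hc]
    exact OuterMeasure.le_ofFunction.2 hlength
  refine Measure.le_iff'.2 fun s => ?_
  rw [Measure.smul_apply, Real.volume_val, StieltjesFunction.measure]
  exact houter s

lemma rnDeriv_le_of_le_smul {α : Type*} [MeasurableSpace α] {μ ν : Measure α} [SigmaFinite μ]
    {c : ℝ≥0∞} (hle : ν ≤ c • μ) : ∀ᵐ x ∂μ, ν.rnDeriv μ x ≤ c := by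
  refine ae_le_of_forall_setLIntegral_le_of_sigmaFinite (ν.measurable_rnDeriv μ) fun s _ _ => ?_
  rw [setLIntegral_const]
  exact (Measure.setLIntegral_rnDeriv_le s).trans (hle s)

/-- if the imaginary part of the Stieltjes transform of a probability measure
`ν` is bounded by `K` on the upper half plane, then `ν` is absolutely continuous w.r.t.
Lebesgue measure with density bounded by `K/π` almost everywhere. -/
theorem absolutely_continuous_of_bounded_stieltjes
    (ν : Measure ℝ) [IsProbabilityMeasure ν] (K : ℝ) (hK : 0 < K)
    (h : ∀ z : ℂ, 0 < z.im → (stieltjesTransform ν z).im ≤ K) :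
    ν ≪ volume ∧
      ∀ᵐ x ∂(volume : Measure ℝ), ν.rnDeriv volume x ≤ ENNReal.ofReal (K / Real.pi) := by
  have hc₀ : ENNReal.ofReal (K / π) ≠ 0 := (ENNReal.ofReal_pos.2 (div_pos hK pi_pos)).ne'
  have hle : ν ≤ ENNReal.ofReal (K / π) • volume :=
    le_smul_volume_of_measure_Ioc_le hc₀ ENNReal.ofReal_ne_top
      (measure_Ioc_le_of_measure_Ioo_le ENNReal.ofReal_ne_top
        (measure_Ioo_le_of_im_stieltjesTransform_le ν h))
  exact ⟨Measure.absolutelyContinuous_of_le_smul hle, rnDeriv_le_of_le_smul hle⟩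
end
end

section
/- Fix n ≥ 1 and arbitrary real numbers a_0, a_1, …, a_n (a deterministic statement). Then Q_{2n}·C_{2n}·Q_{2n} is the 2n×2n block matrix whose top-left n×n block equals T_n° and whose remaining three blocks are zero; that is, (Q_{2n}·C_{2n}·Q_{2n})_{jk} = (T_n°)_{jk} for 0 ≤ j,k ≤ n−1 and (Q_{2n}·C_{2n}·Q_{2n})_{jk} = 0 otherwise. -/
open Matrix

noncomputable section

/-- The modified symmetric Toeplitz matrix `T_n°`. -/
def toeplitzMod (n : ℕ) (a : ℕ → ℝ) : Matrix (Fin n) (Fin n) ℝ :=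
  Matrix.of fun j k => if j = k then Real.sqrt 2 * a 0 else a ((j : ℤ) - (k : ℤ)).natAbs

/-- The sequence `b` of the circulant embedding. -/
def bseq (n : ℕ) (a : ℕ → ℝ) (j : ℕ) : ℝ :=
  if j = 0 then Real.sqrt 2 * a 0
  else if j = n then Real.sqrt 2 * a n
  else if j < n then a j
  else a (2 * n - j)

/-- The `2n × 2n` real circulant matrix `C_{2n}(j,k) = b_{(j-k) mod 2n}`. -/
def circulantMatR (n : ℕ) (a : ℕ → ℝ) : Matrix (Fin (2 * n)) (Fin (2 * n)) ℝ :=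
  Matrix.of fun j k => bseq n a ((((j : ℤ) - (k : ℤ)) % (2 * n : ℤ)).toNat)

/-- The projection `Q_{2n}` on the first `n` coordinates (real version). -/
def qMatR (n : ℕ) : Matrix (Fin (2 * n)) (Fin (2 * n)) ℝ :=
  Matrix.diagonal fun j => if (j : ℕ) < n then 1 else 0

lemma qMatR_mul_mul_qMatR_apply {n : ℕ} (A : Matrix (Fin (2 * n)) (Fin (2 * n)) ℝ)
    (j k : Fin (2 * n)) :
    (qMatR n * A * qMatR n) j k = if (j : ℕ) < n ∧ (k : ℕ) < n then A j k else 0 := by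
  rw [qMatR, mul_diagonal, diagonal_mul]
  by_cases hj : (j : ℕ) < n <;> by_cases hk : (k : ℕ) < n <;> simp [hj, hk]

lemma bseq_of_lt {n m : ℕ} (a : ℕ → ℝ) (hm : m < n) :
    bseq n a m = if m = 0 then Real.sqrt 2 * a 0 else a m := by
  unfold bseq
  split_ifs <;> first | rfl | omega

lemma bseq_two_mul_sub {n m : ℕ} (a : ℕ → ℝ) (hm₀ : 0 < m) (hm : m < n) :
    bseq n a (2 * n - m) = a m := by
  rw [bseq, if_neg (by omega), if_neg (by omega), if_neg (by omega),
    show 2 * n - (2 * n - m) = m by omega]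

/-- For `|d| < n` the residue of `d` mod `2n` is `d` or `2n + d`, and `b` reads `a |d|` at both. -/
lemma bseq_toNat_emod {n : ℕ} (a : ℕ → ℝ) {d : ℤ} (hd : |d| < n) :
    bseq n a ((d % (2 * n : ℤ)).toNat) = if d = 0 then Real.sqrt 2 * a 0 else a d.natAbs := by
  rw [abs_lt] at hd
  rcases le_or_gt 0 d with hd₀ | hd₀
  · lift d to ℕ using hd₀
    rw [Int.emod_eq_of_lt (by positivity) (by omega), Int.toNat_natCast, Int.natAbs_natCast,
      bseq_of_lt a (by omega)]
    simp only [Nat.cast_eq_zero]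
  · obtain ⟨m, rfl⟩ : ∃ m : ℕ, d = -m := ⟨d.natAbs, by omega⟩
    have hmod : (-(m : ℤ)) % (2 * n : ℤ) = ((2 * n - m : ℕ) : ℤ) := by
      rw [← Int.add_emod_right, Int.emod_eq_of_lt (by omega) (by omega)]
      omega
    rw [hmod, Int.toNat_natCast, bseq_two_mul_sub a (by omega) (by omega), if_neg (by omega),
      Int.natAbs_neg, Int.natAbs_natCast]

lemma circulantMatR_apply_of_lt {n : ℕ} (a : ℕ → ℝ) {j k : Fin (2 * n)} (hj : (j : ℕ) < n)
    (hk : (k : ℕ) < n) : circulantMatR n a j k = toeplitzMod n a ⟨j, hj⟩ ⟨k, hk⟩ := by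
  rw [circulantMatR, toeplitzMod, of_apply, of_apply, bseq_toNat_emod a (by rw [abs_lt]; omega)]
  simp only [sub_eq_zero, Nat.cast_inj, Fin.mk.injEq]

theorem qMat_circulant_qMat_eq_toeplitz_general
    (n : ℕ) (a : ℕ → ℝ) :
    ∀ j k : Fin (2 * n),
      (qMatR n * circulantMatR n a * qMatR n) j k =
        if h : (j : ℕ) < n ∧ (k : ℕ) < n
        then toeplitzMod n a ⟨j, h.1⟩ ⟨k, h.2⟩
        else 0 := by
  intro j k
  rw [qMatR_mul_mul_qMatR_apply]
  split_ifs with h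
  · exact circulantMatR_apply_of_lt a h.1 h.2
  · rfl

/-- `Q_{2n} C_{2n} Q_{2n}` has top-left `n × n` block `T_n°` and the
remaining three blocks zero. -/
theorem qMat_circulant_qMat_eq_toeplitz
    (n : ℕ) (hn : 1 ≤ n) (a : ℕ → ℝ) :
    ∀ j k : Fin (2 * n),
      (qMatR n * circulantMatR n a * qMatR n) j k =
        if h : (j : ℕ) < n ∧ (k : ℕ) < n
        then toeplitzMod n a ⟨j, h.1⟩ ⟨k, h.2⟩
        else 0 :=
  qMat_circulant_qMat_eq_toeplitz_general n a

end
end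

section
/- For every λ ∈ ℝ, E ∈ ℝ, δ > 0 and ε > 0, the matrix H_λ − E·I + iδ·I + iε·V is invertible; and, writing K = B·(H_λ − E·I + iδ·I + iε·V)^{-1}·B, for every φ ∈ ℂ^m with ‖φ‖ = 1 one has ‖K·φ‖ ≥ −Im⟨φ, K·φ⟩ ≥ c_0·ε·‖K·φ‖². In particular ‖K·φ‖ ≤ (c_0·ε)^{-1} and |⟨φ, K·φ⟩| ≤ (c_0·ε)^{-1}. -/
open Matrix MeasureTheory
open scoped ComplexOrder

noncomputable section

/-- The regularized matrix `H_λ - E·I + iδ·I + iε·V` where `H_λ = H0 + λV`. -/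
def regMat (m : ℕ) (H0 V : Matrix (Fin m) (Fin m) ℂ) (E lam eps del : ℝ) :
    Matrix (Fin m) (Fin m) ℂ :=
  H0 + (lam : ℂ) • V - (E : ℂ) • 1 + (Complex.I * (del : ℂ)) • 1 + (Complex.I * (eps : ℂ)) • V

/-- `K(λ, ε, δ) = B (H_λ - E + iδ + iεV)⁻¹ B`. -/
def kMat (m : ℕ) (H0 V B : Matrix (Fin m) (Fin m) ℂ) (E lam eps del : ℝ) :
    Matrix (Fin m) (Fin m) ℂ :=
  B * (regMat m H0 V E lam eps del)⁻¹ * B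

/-- `F(ε, δ) = ∫ g(λ) ⟨φ, K(λ, ε, δ) φ⟩ dλ`. -/
def Fval (m : ℕ) (H0 V B : Matrix (Fin m) (Fin m) ℂ) (E : ℝ) (g : ℝ → ℝ)
    (φ : Fin m → ℂ) (eps del : ℝ) : ℂ :=
  ∫ lam : ℝ, (g lam : ℂ) * (star φ ⬝ᵥ (kMat m H0 V B E lam eps del).mulVec φ)

/-!
Write `A = H_λ - E + iδ + iεV`. Since `H_λ` is Hermitian, `Im⟨x, A x⟩ = δ‖x‖² + ε⟨x, V x⟩`, and
`V ≥ c₀B²` bounds this below by `δ‖x‖² + c₀ε‖Bx‖²`; in particular `A` is injective. For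
`ψ = A⁻¹Bφ` the Hermitian `B` gives `⟨φ, Kφ⟩ = ⟨Bφ, ψ⟩ = conj⟨ψ, Aψ⟩` and `Kφ = Bψ`, so
`-Im⟨φ, Kφ⟩ = Im⟨ψ, Aψ⟩ ≥ c₀ε‖Kφ‖²`, while Cauchy–Schwarz gives `-Im⟨φ, Kφ⟩ ≤ ‖Kφ‖`.
Then `c₀ε‖Kφ‖² ≤ ‖Kφ‖` forces `‖Kφ‖ ≤ (c₀ε)⁻¹`.
-/

lemma le_inv_of_mul_sq_le {c t : ℝ} (hc : 0 < c) (ht : 0 ≤ t) (h : c * t ^ 2 ≤ t) :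
    t ≤ c⁻¹ := by
  rcases ht.eq_or_lt with rfl | ht
  · positivity
  · rw [le_inv_comm₀ ht hc, inv_eq_one_div, le_div_iff₀ ht]
    nlinarith

namespace Matrix

variable {n : Type*} [Fintype n]

lemma star_dotProduct_self_eq_sum_norm_sq (x : n → ℂ) :
    star x ⬝ᵥ x = ((∑ i, ‖x i‖ ^ 2 : ℝ) : ℂ) := by
  simp only [dotProduct, Pi.star_apply, RCLike.star_def, Complex.ofReal_sum, Complex.ofReal_pow]
  refine Finset.sum_congr rfl fun i _ => ?_
  rw [mul_comm, Complex.mul_conj, Complex.normSq_eq_norm_sq, Complex.ofReal_pow]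

lemma norm_star_dotProduct_le (x y : n → ℂ) :
    ‖star x ⬝ᵥ y‖ ≤ √(∑ i, ‖x i‖ ^ 2) * √(∑ i, ‖y i‖ ^ 2) := by
  have h := norm_inner_le_norm (𝕜 := ℂ) (WithLp.toLp 2 x) (WithLp.toLp 2 y)
  rwa [EuclideanSpace.inner_toLp_toLp, dotProduct_comm, EuclideanSpace.norm_eq,
    EuclideanSpace.norm_eq] at h

lemma IsHermitian.star_vecMul {B : Matrix n n ℂ} (hB : B.IsHermitian) (x : n → ℂ) :
    star x ᵥ* B = star (B *ᵥ x) := by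
  rw [star_mulVec, hB.eq]

lemma IsHermitian.star_dotProduct_mul_self_mulVec {B : Matrix n n ℂ} (hB : B.IsHermitian)
    (x : n → ℂ) : star x ⬝ᵥ (B * B) *ᵥ x = ((∑ i, ‖(B *ᵥ x) i‖ ^ 2 : ℝ) : ℂ) := by
  rw [← mulVec_mulVec, dotProduct_mulVec, hB.star_vecMul, star_dotProduct_self_eq_sum_norm_sq]

lemma isUnit_of_mul_sum_norm_sq_le_im {A : Matrix n n ℂ} [DecidableEq n] {δ : ℝ} (hδ : 0 < δ)
    (h : ∀ x, δ * ∑ i, ‖x i‖ ^ 2 ≤ (star x ⬝ᵥ A *ᵥ x).im) : IsUnit A := by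
  refine mulVec_injective_iff_isUnit.mp <| (injective_iff_map_eq_zero A.mulVecLin).mpr
    fun x hx => ?_
  have hx' : δ * ∑ i, ‖x i‖ ^ 2 ≤ 0 := by simpa [← mulVecLin_apply, hx] using h x
  have hsum : ∑ i, ‖x i‖ ^ 2 = 0 :=
    le_antisymm (nonpos_of_mul_nonpos_right hx' hδ) (by positivity)
  funext i
  simpa using (Finset.sum_eq_zero_iff_of_nonneg fun i _ => by positivity).mp hsum i
    (Finset.mem_univ i)

lemma IsHermitian.star_dotProduct_mulVec_eq_star {A B : Matrix n n ℂ} (hB : B.IsHermitian)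
    {φ ψ : n → ℂ} (hψ : A *ᵥ ψ = B *ᵥ φ) :
    star φ ⬝ᵥ B *ᵥ ψ = star (star ψ ⬝ᵥ A *ᵥ ψ) := by
  rw [← star_dotProduct, hψ, dotProduct_mulVec, hB.star_vecMul]

lemma le_re_star_dotProduct_mulVec_of_posSemidef_sub {V B : Matrix n n ℂ} (hB : B.IsHermitian)
    {c : ℝ} (hVB : (V - (c : ℂ) • (B * B)).PosSemidef) (x : n → ℂ) :
    c * ∑ i, ‖(B *ᵥ x) i‖ ^ 2 ≤ (star x ⬝ᵥ V *ᵥ x).re := by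
  have h := hVB.re_dotProduct_nonneg x
  rw [sub_mulVec, dotProduct_sub, smul_mulVec, dotProduct_smul, smul_eq_mul,
    hB.star_dotProduct_mul_self_mulVec] at h
  rw [← Complex.ofReal_mul, RCLike.re_to_complex, Complex.sub_re, Complex.ofReal_re] at h
  linarith

end Matrix

section RegularizedResolvent

variable {m : ℕ} {H0 V B : Matrix (Fin m) (Fin m) ℂ}

lemma im_star_dotProduct_regMat_mulVec (hH0 : H0.IsHermitian) (hV : V.IsHermitian)
    (E lam eps del : ℝ) (x : Fin m → ℂ) :
    (star x ⬝ᵥ regMat m H0 V E lam eps del *ᵥ x).im =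
      del * ∑ i, ‖x i‖ ^ 2 + eps * (star x ⬝ᵥ V *ᵥ x).re := by
  have hH0x := hH0.im_star_dotProduct_mulVec_self x
  have hVx := hV.im_star_dotProduct_mulVec_self x
  simp only [RCLike.im_to_complex] at hH0x hVx
  simp only [regMat, add_mulVec, sub_mulVec, smul_mulVec, one_mulVec, dotProduct_add,
    dotProduct_sub, dotProduct_smul, smul_eq_mul, star_dotProduct_self_eq_sum_norm_sq,
    Complex.add_im, Complex.sub_im, Complex.mul_im, Complex.mul_re, hH0x, hVx,
    Complex.I_re, Complex.I_im, Complex.ofReal_re, Complex.ofReal_im]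
  ring

lemma le_im_star_dotProduct_regMat_mulVec (hH0 : H0.IsHermitian) (hV : V.IsHermitian)
    (hB : B.IsHermitian) {c0 : ℝ} (hVB : (V - (c0 : ℂ) • (B * B)).PosSemidef)
    (E lam : ℝ) {eps : ℝ} (heps : 0 ≤ eps) (del : ℝ) (x : Fin m → ℂ) :
    del * ∑ i, ‖x i‖ ^ 2 + c0 * eps * ∑ i, ‖(B *ᵥ x) i‖ ^ 2 ≤
      (star x ⬝ᵥ regMat m H0 V E lam eps del *ᵥ x).im := by
  rw [im_star_dotProduct_regMat_mulVec hH0 hV, mul_comm c0, mul_assoc]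
  gcongr
  exact le_re_star_dotProduct_mulVec_of_posSemidef_sub hB hVB x

end RegularizedResolvent

theorem regMat_invertible_and_apriori_bound_general
    (m : ℕ) (H0 V B : Matrix (Fin m) (Fin m) ℂ)
    (hH0 : H0.IsHermitian) (hV : V.IsHermitian) (hB : B.PosSemidef)
    (c0 : ℝ) (hc0 : 0 < c0) (hVB : (V - (c0 : ℂ) • (B * B)).PosSemidef)
    (lam E : ℝ) (del eps : ℝ) (hdel : 0 < del) (heps : 0 < eps) :
    IsUnit (regMat m H0 V E lam eps del) ∧
    ∀ φ : Fin m → ℂ, (∑ i, ‖φ i‖ ^ 2) = 1 →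
      (-(star φ ⬝ᵥ (kMat m H0 V B E lam eps del).mulVec φ).im ≤
          Real.sqrt (∑ i, ‖(kMat m H0 V B E lam eps del).mulVec φ i‖ ^ 2)) ∧
      (c0 * eps * (∑ i, ‖(kMat m H0 V B E lam eps del).mulVec φ i‖ ^ 2) ≤
          -(star φ ⬝ᵥ (kMat m H0 V B E lam eps del).mulVec φ).im) ∧
      (Real.sqrt (∑ i, ‖(kMat m H0 V B E lam eps del).mulVec φ i‖ ^ 2) ≤ (c0 * eps)⁻¹) ∧
      (‖star φ ⬝ᵥ (kMat m H0 V B E lam eps del).mulVec φ‖ ≤ (c0 * eps)⁻¹) := by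
  set A := regMat m H0 V E lam eps del
  have hcoercive := le_im_star_dotProduct_regMat_mulVec hH0 hV hB.1 hVB E lam heps.le del
  have hA : IsUnit A := isUnit_of_mul_sum_norm_sq_le_im hdel fun x =>
    (le_add_of_nonneg_right (by positivity)).trans (hcoercive x)
  refine ⟨hA, fun φ hφ => ?_⟩
  set ψ := A⁻¹ *ᵥ B *ᵥ φ
  have hAψ : A *ᵥ ψ = B *ᵥ φ := by
    rw [mulVec_mulVec, mul_nonsing_inv A ((isUnit_iff_isUnit_det A).mp hA), one_mulVec]
  have hKφ : kMat m H0 V B E lam eps del *ᵥ φ = B *ᵥ ψ := by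
    simp only [kMat, ψ, A, mulVec_mulVec, Matrix.mul_assoc]
  set z := star φ ⬝ᵥ kMat m H0 V B E lam eps del *ᵥ φ
  set S := ∑ i, ‖(kMat m H0 V B E lam eps del *ᵥ φ) i‖ ^ 2
  have hnorm : ‖z‖ ≤ √S := by
    simpa [hφ] using norm_star_dotProduct_le φ (kMat m H0 V B E lam eps del *ᵥ φ)
  have hupper : -z.im ≤ √S := (neg_le_abs _).trans ((Complex.abs_im_le_norm z).trans hnorm)
  have hlower : c0 * eps * S ≤ -z.im := by
    have hz : -z.im = (star ψ ⬝ᵥ A *ᵥ ψ).im := by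
      simp only [z, hKφ, hB.1.star_dotProduct_mulVec_eq_star hAψ, Complex.star_def,
        Complex.conj_im, neg_neg]
    have hS : S = ∑ i, ‖(B *ᵥ ψ) i‖ ^ 2 := by simp only [S, hKφ]
    rw [hz, hS]
    exact (le_add_of_nonneg_left (by positivity)).trans (hcoercive ψ)
  have hbound : √S ≤ (c0 * eps)⁻¹ := le_inv_of_mul_sq_le (by positivity) (Real.sqrt_nonneg _)
    (by rw [Real.sq_sqrt (by positivity)]; exact hlower.trans hupper)
  exact ⟨hupper, hlower, hbound, hnorm.trans hbound⟩

/-- `H_λ - E + iδ + iεV` is invertible, and with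
`K = B (H_λ - E + iδ + iεV)⁻¹ B`, for unit vectors `φ` one has
`‖Kφ‖ ≥ -Im⟨φ, Kφ⟩ ≥ c0 ε ‖Kφ‖²`, hence `‖Kφ‖ ≤ (c0 ε)⁻¹` and `|⟨φ, Kφ⟩| ≤ (c0 ε)⁻¹`. -/
theorem regMat_invertible_and_apriori_bound
    (m : ℕ) (hm : 1 ≤ m) (H0 V B : Matrix (Fin m) (Fin m) ℂ)
    (hH0 : H0.IsHermitian) (hV : V.IsHermitian) (hB : B.PosSemidef)
    (c0 : ℝ) (hc0 : 0 < c0) (hVB : (V - (c0 : ℂ) • (B * B)).PosSemidef)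
    (lam E : ℝ) (del eps : ℝ) (hdel : 0 < del) (heps : 0 < eps) :
    IsUnit (regMat m H0 V E lam eps del) ∧
    ∀ φ : Fin m → ℂ, (∑ i, ‖φ i‖ ^ 2) = 1 →
      (-(star φ ⬝ᵥ (kMat m H0 V B E lam eps del).mulVec φ).im ≤
          Real.sqrt (∑ i, ‖(kMat m H0 V B E lam eps del).mulVec φ i‖ ^ 2)) ∧
      (c0 * eps * (∑ i, ‖(kMat m H0 V B E lam eps del).mulVec φ i‖ ^ 2) ≤
          -(star φ ⬝ᵥ (kMat m H0 V B E lam eps del).mulVec φ).im) ∧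
      (Real.sqrt (∑ i, ‖(kMat m H0 V B E lam eps del).mulVec φ i‖ ^ 2) ≤ (c0 * eps)⁻¹) ∧
      (‖star φ ⬝ᵥ (kMat m H0 V B E lam eps del).mulVec φ‖ ≤ (c0 * eps)⁻¹) :=
  regMat_invertible_and_apriori_bound_general m H0 V B hH0 hV hB c0 hc0 hVB lam E del eps hdel heps

end
end

section
/- Let g: ℝ → ℝ be continuously differentiable with g, g' ∈ L¹(ℝ), and let φ ∈ ℂ^m with ‖φ‖ = 1. Then for every E ∈ ℝ and δ > 0, the function ε ↦ F(ε, δ) is differentiable on (0, ∞), it satisfies i·(d/dε)F(ε, δ) = ∫_ℝ g'(λ)·⟨φ, K(λ, ε, δ)·φ⟩ dλ, and consequently |(d/dε)F(ε, δ)| ≤ (ε·c_0)^{-1}·‖g'‖_{L¹} for all ε > 0. -/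
/-!
With `A = H₀ - E + iδ`, the regularized matrix is `A + zV` at `z = λ + iε`, so
`⟨φ, K(λ, ε, δ) φ⟩ = f(λ + iε)` for `f z = ⟨φ, B (A + zV)⁻¹ B φ⟩`. Since
`Im ⟨y, (A + zV) y⟩ ≥ δ‖y‖² + c₀ Im z ‖By‖²`, the matrix `A + zV` is invertible for `Im z > 0`, and
putting `y = (A + zV)⁻¹ Bφ` turns this into the bound `|f z| ≤ (c₀ Im z)⁻¹`. So `f` is holomorphic
on the upper half-plane and Cauchy's estimate bounds `f'` on horizontal strips, which justifies
differentiating `F` under the integral. As `∂_ε f(λ + iε) = i ∂_λ f(λ + iε)`, an integration by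
parts in `λ` moves the derivative onto `g`, giving `F'(ε) = -i ∫ g'(λ) f(λ + iε) dλ`.
-/

open Matrix MeasureTheory
open scoped ComplexOrder

noncomputable section

open Complex Metric WithLp
open scoped InnerProductSpace

section InnerProductSpace

variable {E : Type*} [NormedAddCommGroup E] [InnerProductSpace ℂ E]

theorem norm_inner_apply_le_of_le_im_inner {T B : E →ₗ[ℂ] E} (hB : B.IsSymmetric) {c : ℝ}
    (hc : 0 < c) (hT : ∀ y, c * ‖B y‖ ^ 2 ≤ (⟪y, T y⟫_ℂ).im) {x y : E} (hy : T y = B x) :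
    ‖⟪x, B y⟫_ℂ‖ ≤ ‖x‖ ^ 2 / c := by
  have h_upper : ‖⟪x, B y⟫_ℂ‖ ≤ ‖x‖ * ‖B y‖ := norm_inner_le_norm _ _
  have h_lower : c * ‖B y‖ ^ 2 ≤ ‖⟪x, B y⟫_ℂ‖ := calc
    c * ‖B y‖ ^ 2 ≤ (⟪y, T y⟫_ℂ).im := hT y
    _ ≤ ‖⟪y, T y⟫_ℂ‖ := im_le_norm _
    _ = ‖⟪x, B y⟫_ℂ‖ := by rw [hy, ← hB, ← inner_conj_symm, norm_conj]
  rw [le_div_iff₀ hc]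
  nlinarith [sq_nonneg (‖x‖ - c * ‖B y‖), norm_nonneg x, norm_nonneg (B y)]

theorem le_im_inner_add_smul_apply {A V B : E →ₗ[ℂ] E} {δ c : ℝ}
    (hA : ∀ y, δ * ‖y‖ ^ 2 ≤ (⟪y, A y⟫_ℂ).im) (hB : B.IsSymmetric) (hVB : (c : ℂ) • (B * B) ≤ V)
    {z : ℂ} (hz : 0 ≤ z.im) (y : E) :
    δ * ‖y‖ ^ 2 + z.im * c * ‖B y‖ ^ 2 ≤ (⟪y, (A + z • V) y⟫_ℂ).im := by
  obtain ⟨hre, him⟩ := nonneg_iff.1 (LinearMap.IsPositive.inner_nonneg_right hVB y)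
  have hBB : ⟪y, (B * B) y⟫_ℂ = (‖B y‖ ^ 2 : ℝ) := by
    rw [Module.End.mul_apply, ← hB, inner_self_eq_norm_sq_to_K]; norm_cast
  simp only [LinearMap.sub_apply, LinearMap.smul_apply, inner_sub_right, inner_smul_right, hBB,
    sub_re, sub_im, mul_re, mul_im, ofReal_re, ofReal_im, mul_zero, zero_mul, add_zero,
    sub_zero, sub_nonneg] at hre him
  simp only [LinearMap.add_apply, LinearMap.smul_apply, inner_add_right, inner_smul_right, add_im,
    mul_im, ← him, mul_zero, zero_add]
  nlinarith [hA y, mul_le_mul_of_nonneg_left hre hz]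

end InnerProductSpace

namespace Matrix

variable {n : Type*} [Fintype n] [DecidableEq n]

theorem toEuclideanLin_mul {𝕜 : Type*} [RCLike 𝕜] (A B : Matrix n n 𝕜) :
    toEuclideanLin (A * B) = toEuclideanLin A * toEuclideanLin B := by
  ext v : 1
  simp

theorem toEuclideanLin_le_toEuclideanLin {𝕜 : Type*} [RCLike 𝕜] {V W : Matrix n n 𝕜}
    (h : (V - W).PosSemidef) : toEuclideanLin W ≤ toEuclideanLin V := by
  rwa [LinearMap.le_def, ← map_sub, isPositive_toEuclideanLin_iff]

theorem im_inner_toEuclideanLin_add_I_mul_smul_one {H : Matrix n n ℂ} (hH : H.IsHermitian)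
    (δ : ℝ) (y : EuclideanSpace ℂ n) :
    (⟪y, toEuclideanLin (H + (I * δ) • 1) y⟫_ℂ).im = δ * ‖y‖ ^ 2 := by
  have hHy := (isSymmetric_toEuclideanLin_iff.2 hH).im_inner_self_apply y
  rw [map_add, map_smul, LinearMap.add_apply, LinearMap.smul_apply, inner_add_right,
    inner_smul_right, add_im, show toEuclideanLin (1 : Matrix n n ℂ) y = y by
      simp, inner_self_eq_norm_sq_to_K]
  simp only [RCLike.im_to_complex] at hHy
  simp [hHy, ← ofReal_pow]

variable {H V B : Matrix n n ℂ} {c δ : ℝ}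

theorem le_im_inner_toEuclideanLin_add_smul (hH : H.IsHermitian) (hB : B.IsHermitian)
    (hVB : (V - (c : ℂ) • (B * B)).PosSemidef) {z : ℂ} (hz : 0 ≤ z.im) (y : EuclideanSpace ℂ n) :
    δ * ‖y‖ ^ 2 + z.im * c * ‖toEuclideanLin B y‖ ^ 2 ≤
      (⟪y, toEuclideanLin (H + (I * δ) • 1 + z • V) y⟫_ℂ).im := by
  rw [map_add, map_smul]
  refine le_im_inner_add_smul_apply
    (fun y => (im_inner_toEuclideanLin_add_I_mul_smul_one hH δ y).ge)
    (isSymmetric_toEuclideanLin_iff.2 hB) ?_ hz y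
  simpa only [map_smul, toEuclideanLin_mul] using toEuclideanLin_le_toEuclideanLin hVB

theorem isUnit_add_I_mul_smul_one_add_smul (hH : H.IsHermitian) (hB : B.IsHermitian)
    (hVB : (V - (c : ℂ) • (B * B)).PosSemidef) (hc : 0 ≤ c) (hδ : 0 < δ) {z : ℂ}
    (hz : 0 ≤ z.im) : IsUnit (H + (I * δ) • 1 + z • V) := by
  refine mulVec_injective_iff_isUnit.1 ((injective_iff_map_eq_zero (mulVecLin _)).2 fun y hy => ?_)
  have h := le_im_inner_toEuclideanLin_add_smul (δ := δ) hH hB hVB hz (toLp 2 y)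
  have hy0 : toEuclideanLin (H + (I * δ) • 1 + z • V) (toLp 2 y) = 0 := by
    simpa using congrArg (toLp 2) hy
  rw [hy0, inner_zero_right, zero_im] at h
  have hy2 : ‖toLp 2 y‖ ^ 2 ≤ 0 := by
    nlinarith [mul_nonneg (mul_nonneg hz hc) (sq_nonneg ‖toEuclideanLin B (toLp 2 y)‖)]
  simpa using hy2

def resolventForm (A V B : Matrix n n ℂ) (x : n → ℂ) (z : ℂ) : ℂ :=
  star x ⬝ᵥ (B * (A + z • V)⁻¹ * B) *ᵥ x

theorem norm_resolventForm_le (hH : H.IsHermitian) (hB : B.IsHermitian)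
    (hVB : (V - (c : ℂ) • (B * B)).PosSemidef) (hc : 0 < c) (hδ : 0 < δ) {z : ℂ} (hz : 0 < z.im)
    (x : n → ℂ) :
    ‖resolventForm (H + (I * δ) • 1) V B x z‖ ≤ ‖toLp 2 x‖ ^ 2 / (z.im * c) := by
  set M := H + (I * δ) • 1 + z • V
  have hM : M * M⁻¹ = 1 := mul_nonsing_inv M ((isUnit_iff_isUnit_det M).1
    (isUnit_add_I_mul_smul_one_add_smul hH hB hVB hc.le hδ hz.le))
  have hform : resolventForm (H + (I * δ) • 1) V B x z =
      ⟪toLp 2 x, toEuclideanLin B (toLp 2 (M⁻¹ *ᵥ B *ᵥ x))⟫_ℂ := by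
    simp [resolventForm, M, dotProduct_comm, mulVec_mulVec, Matrix.mul_assoc,
      EuclideanSpace.inner_toLp_toLp]
  rw [hform]
  refine norm_inner_apply_le_of_le_im_inner (T := toEuclideanLin M)
    (isSymmetric_toEuclideanLin_iff.2 hB) (mul_pos hz hc) (fun y => ?_) ?_
  · have := le_im_inner_toEuclideanLin_add_smul (δ := δ) hH hB hVB hz.le y
    nlinarith [mul_nonneg hδ.le (sq_nonneg ‖y‖)]
  · simp [mulVec_mulVec, ← Matrix.mul_assoc, hM]

section

attribute [local instance] Matrix.linftyOpNormedAddCommGroup Matrix.linftyOpNormedRing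
  Matrix.linftyOpNormedAlgebra

theorem differentiableAt_resolventForm (A V B : Matrix n n ℂ) (x : n → ℂ) {z : ℂ}
    (hz : IsUnit (A + z • V)) : DifferentiableAt ℂ (resolventForm A V B x) z := by
  have hinv : DifferentiableAt ℂ (fun z : ℂ => (A + z • V)⁻¹) z := by
    simp_rw [nonsing_inv_eq_ringInverse]
    exact (by fun_prop : DifferentiableAt ℂ (fun z : ℂ => A + z • V) z).inverse hz
  unfold resolventForm
  simp only [dotProduct, mulVec]
  fun_prop

end

theorem differentiableOn_resolventForm (hH : H.IsHermitian) (hB : B.IsHermitian)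
    (hVB : (V - (c : ℂ) • (B * B)).PosSemidef) (hc : 0 ≤ c) (hδ : 0 < δ) (x : n → ℂ) :
    DifferentiableOn ℂ (resolventForm (H + (I * δ) • 1) V B x) {z | 0 < z.im} := fun _ hz =>
  (differentiableAt_resolventForm _ V B x
    (isUnit_add_I_mul_smul_one_add_smul hH hB hVB hc hδ (le_of_lt hz))).differentiableWithinAt

end Matrix

section UpperHalfPlane

variable {f : ℂ → ℂ} {C : ℝ}

theorem norm_deriv_le_of_norm_le_div_im (hf : DifferentiableOn ℂ f {z | 0 < z.im})
    (hfC : ∀ z, 0 < z.im → ‖f z‖ ≤ C / z.im) {r : ℝ} (hr : 0 < r) {z : ℂ} (hz : r ≤ z.im) :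
    ‖deriv f z‖ ≤ 4 * C / r ^ 2 := by
  have hC : 0 ≤ C := by
    simpa using (le_div_iff₀ (hr.trans_le hz)).1 ((norm_nonneg _).trans (hfC z (hr.trans_le hz)))
  have hr2 : 0 < r / 2 := half_pos hr
  have him : ∀ w ∈ closedBall z (r / 2), r / 2 ≤ w.im := fun w hw => by
    have := (abs_im_le_norm (w - z)).trans (mem_closedBall_iff_norm.1 hw)
    rw [sub_im] at this
    linarith [(abs_le.1 this).1]
  have hd : DiffContOnCl ℂ f (ball z (r / 2)) :=
    (hf.mono fun w hw => hr2.trans_le (him w (closure_ball_subset_closedBall hw))).diffContOnCl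
  calc ‖deriv f z‖ ≤ C / (r / 2) / (r / 2) :=
        Complex.norm_deriv_le_of_forall_mem_sphere_norm_le hr2 hd fun w hw =>
          (hfC w (hr2.trans_le (him w (sphere_subset_closedBall hw)))).trans
            (div_le_div_of_nonneg_left hC hr2 (him w (sphere_subset_closedBall hw)))
    _ = 4 * C / r ^ 2 := by field_simp; ring

theorem norm_comp_add_mul_I_le (hfC : ∀ z, 0 < z.im → ‖f z‖ ≤ C / z.im) (x : ℝ) {t : ℝ}
    (ht : 0 < t) : ‖f (x + t * I)‖ ≤ C / t := by
  simpa using hfC (x + t * I) (by simpa using ht)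

theorem differentiableAt_add_mul_I (hf : DifferentiableOn ℂ f {z | 0 < z.im}) (x : ℝ) {t : ℝ}
    (ht : 0 < t) : DifferentiableAt ℂ f (x + t * I) :=
  hf.differentiableAt ((isOpen_lt continuous_const continuous_im).mem_nhds (by simpa using ht))

theorem continuous_comp_add_mul_I (hf : DifferentiableOn ℂ f {z | 0 < z.im}) {t : ℝ}
    (ht : 0 < t) : Continuous fun x : ℝ => f (x + t * I) :=
  continuous_iff_continuousAt.2 fun x => (differentiableAt_add_mul_I hf x ht).continuousAt.comp
    (f := fun y : ℝ => (y : ℂ) + t * I) (by fun_prop)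

theorem integrable_mul_comp_add_mul_I (hf : DifferentiableOn ℂ f {z | 0 < z.im})
    (hfC : ∀ z, 0 < z.im → ‖f z‖ ≤ C / z.im) {g : ℝ → ℂ} (hg_int : Integrable g) {t : ℝ}
    (ht : 0 < t) : Integrable fun x => g x * f (x + t * I) :=
  hg_int.mul_bdd (continuous_comp_add_mul_I hf ht).aestronglyMeasurable
    (ae_of_all _ fun x => norm_comp_add_mul_I_le hfC x ht)

theorem norm_integral_mul_comp_add_mul_I_le (hfC : ∀ z, 0 < z.im → ‖f z‖ ≤ C / z.im)
    {g : ℝ → ℂ} (hg_int : Integrable g) {ε : ℝ} (hε : 0 < ε) :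
    ‖∫ x, g x * f (x + ε * I)‖ ≤ C / ε * ∫ x, ‖g x‖ := by
  rw [← integral_const_mul]
  refine norm_integral_le_of_norm_le (hg_int.norm.const_mul _) (ae_of_all _ fun x => ?_)
  rw [norm_mul, mul_comm]
  exact mul_le_mul_of_nonneg_right (norm_comp_add_mul_I_le hfC x hε) (norm_nonneg _)

theorem hasDerivAt_integral_mul_comp_add_mul_I (hf : DifferentiableOn ℂ f {z | 0 < z.im})
    (hfC : ∀ z, 0 < z.im → ‖f z‖ ≤ C / z.im) {g : ℝ → ℂ} (hg_int : Integrable g)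
    {ε : ℝ} (hε : 0 < ε) :
    HasDerivAt (fun t : ℝ => ∫ x, g x * f (x + t * I))
      (∫ x, g x * (deriv f (x + ε * I) * I)) ε := by
  have hf_dt : ∀ x t : ℝ, 0 < t →
      HasDerivAt (fun t : ℝ => f (x + t * I)) (deriv f (x + t * I) * I) t := fun x t ht => by
    have hline : HasDerivAt (fun w : ℂ => x + w * I) I t := by
      simpa using ((hasDerivAt_id (t : ℂ)).mul_const I).const_add (x : ℂ)
    exact ((differentiableAt_add_mul_I hf x ht).hasDerivAt.comp (t : ℂ) hline).comp_ofReal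
  have hf'_bound : ∀ x t : ℝ, ε / 2 < t → ‖deriv f (x + t * I) * I‖ ≤ 4 * C / (ε / 2) ^ 2 :=
    fun x t ht => by
      rw [norm_mul, norm_I, mul_one]
      exact norm_deriv_le_of_norm_le_div_im hf hfC (half_pos hε) (by simpa using ht.le)
  refine (hasDerivAt_integral_of_dominated_loc_of_deriv_le
    (F' := fun (t x : ℝ) => g x * (deriv f (x + t * I) * I))
    (bound := fun x => ‖g x‖ * (4 * C / (ε / 2) ^ 2)) (Ioi_mem_nhds (half_lt_self hε))
    ((eventually_gt_nhds hε).mono fun t ht =>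
      (integrable_mul_comp_add_mul_I hf hfC hg_int ht).aestronglyMeasurable)
    (integrable_mul_comp_add_mul_I hf hfC hg_int hε)
    (hg_int.aestronglyMeasurable.mul
      (((measurable_deriv f).comp (by fun_prop)).aestronglyMeasurable.mul_const I))
    (ae_of_all _ fun x t ht => by
      rw [norm_mul]
      exact mul_le_mul_of_nonneg_left (hf'_bound x t ht) (norm_nonneg _))
    (hg_int.norm.mul_const _)
    (ae_of_all _ fun x t ht => (hf_dt x t ((half_pos hε).trans ht)).const_mul (g x))).2

theorem integral_mul_deriv_comp_add_mul_I (hf : DifferentiableOn ℂ f {z | 0 < z.im})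
    (hfC : ∀ z, 0 < z.im → ‖f z‖ ≤ C / z.im) {g g' : ℝ → ℂ}
    (hg : ∀ x, HasDerivAt g (g' x) x) (hg_int : Integrable g) (hg'_int : Integrable g')
    {ε : ℝ} (hε : 0 < ε) :
    ∫ x, g x * deriv f (x + ε * I) = -∫ x, g' x * f (x + ε * I) := by
  have hf_dx : ∀ x : ℝ, HasDerivAt (fun x : ℝ => f (x + ε * I)) (deriv f (x + ε * I)) x :=
    fun x => ((differentiableAt_add_mul_I hf x hε).hasDerivAt.comp_add_const _ _).comp_ofReal
  have hf'_bound : ∀ x : ℝ, ‖deriv f (x + ε * I)‖ ≤ 4 * C / ε ^ 2 := fun x =>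
    norm_deriv_le_of_norm_le_div_im hf hfC hε (by simp)
  exact integral_mul_deriv_eq_deriv_mul_of_integrable (fun x _ => hg x) (fun x _ => hf_dx x)
    (hg_int.mul_bdd ((measurable_deriv f).comp (by fun_prop)).aestronglyMeasurable
      (ae_of_all _ hf'_bound))
    (integrable_mul_comp_add_mul_I hf hfC hg'_int hε)
    (integrable_mul_comp_add_mul_I hf hfC hg_int hε)

theorem hasDerivAt_integral_mul_comp_add_mul_I_of_hasDerivAt
    (hf : DifferentiableOn ℂ f {z | 0 < z.im}) (hfC : ∀ z, 0 < z.im → ‖f z‖ ≤ C / z.im)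
    {g g' : ℝ → ℂ} (hg : ∀ x, HasDerivAt g (g' x) x) (hg_int : Integrable g)
    (hg'_int : Integrable g') {ε : ℝ} (hε : 0 < ε) :
    HasDerivAt (fun t : ℝ => ∫ x, g x * f (x + t * I))
      (-I * ∫ x, g' x * f (x + ε * I)) ε := by
  refine (hasDerivAt_integral_mul_comp_add_mul_I hf hfC hg_int hε).congr_deriv ?_
  simp_rw [← mul_assoc]
  rw [integral_mul_const, integral_mul_deriv_comp_add_mul_I hf hfC hg hg_int hg'_int hε]
  ring

end UpperHalfPlane

theorem star_dotProduct_kMat_mulVec (m : ℕ) (H0 V B : Matrix (Fin m) (Fin m) ℂ)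
    (E lam eps del : ℝ) (φ : Fin m → ℂ) :
    star φ ⬝ᵥ kMat m H0 V B E lam eps del *ᵥ φ =
      resolventForm (H0 - (E : ℂ) • 1 + (I * del) • 1) V B φ (lam + eps * I) := by
  have : regMat m H0 V E lam eps del = H0 - (E : ℂ) • 1 + (I * del) • 1 + (lam + eps * I) • V := by
    rw [regMat, add_smul, mul_comm (eps : ℂ) I]
    abel
  rw [kMat, resolventForm, this]

theorem Fval_eq_integral_resolventForm (m : ℕ) (H0 V B : Matrix (Fin m) (Fin m) ℂ) (E : ℝ)
    (g : ℝ → ℝ) (φ : Fin m → ℂ) (eps del : ℝ) :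
    Fval m H0 V B E g φ eps del =
      ∫ x : ℝ, (g x : ℂ) *
        resolventForm (H0 - (E : ℂ) • 1 + (I * del) • 1) V B φ (x + eps * I) := by
  simp only [Fval, star_dotProduct_kMat_mulVec]

theorem Fval_hasDerivAt_general
    (m : ℕ) (H0 V B : Matrix (Fin m) (Fin m) ℂ)
    (hH0 : H0.IsHermitian) (hB : B.PosSemidef)
    (c0 : ℝ) (hc0 : 0 < c0) (hVB : (V - (c0 : ℂ) • (B * B)).PosSemidef)
    (g : ℝ → ℝ) (hg : ContDiff ℝ 1 g)
    (hg1 : Integrable g) (hg2 : Integrable (deriv g))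
    (φ : Fin m → ℂ) (hφ : (∑ i, ‖φ i‖ ^ 2) = 1)
    (E : ℝ) (del : ℝ) (hdel : 0 < del) :
    ∀ eps : ℝ, 0 < eps → ∃ F' : ℂ,
      HasDerivAt (fun e => Fval m H0 V B E g φ e del) F' eps ∧
      Complex.I * F' =
        ∫ lam : ℝ, ((deriv g lam : ℝ) : ℂ) * (star φ ⬝ᵥ (kMat m H0 V B E lam eps del).mulVec φ) ∧
      ‖F'‖ ≤ (eps * c0)⁻¹ * ∫ x, |deriv g x| := by
  intro eps heps
  set f := resolventForm (H0 - (E : ℂ) • 1 + (I * del) • 1) V B φ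
  have hH : (H0 - (E : ℂ) • 1).IsHermitian := hH0.sub (isHermitian_one.smul (Complex.conj_ofReal E))
  have hf : DifferentiableOn ℂ f {z | 0 < z.im} :=
    differentiableOn_resolventForm hH hB.1 hVB hc0.le hdel φ
  have hfC : ∀ z : ℂ, 0 < z.im → ‖f z‖ ≤ c0⁻¹ / z.im := fun z hz => by
    have hφ' : ‖toLp 2 φ‖ ^ 2 = 1 := by rw [EuclideanSpace.norm_sq_eq]; exact hφ
    calc ‖f z‖ ≤ ‖toLp 2 φ‖ ^ 2 / (z.im * c0) := norm_resolventForm_le hH hB.1 hVB hc0 hdel hz φ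
      _ = c0⁻¹ / z.im := by rw [hφ']; field_simp
  have hg' : ∀ x, HasDerivAt (fun x : ℝ => (g x : ℂ)) ((deriv g x : ℝ) : ℂ) x := fun x =>
    ((hg.differentiable one_ne_zero x).hasDerivAt).ofReal_comp
  refine ⟨-I * ∫ x : ℝ, ((deriv g x : ℝ) : ℂ) * f (x + eps * I), ?_, ?_, ?_⟩
  · simp only [Fval_eq_integral_resolventForm]
    exact hasDerivAt_integral_mul_comp_add_mul_I_of_hasDerivAt hf hfC hg' hg1.ofReal hg2.ofReal heps
  · simp [star_dotProduct_kMat_mulVec, f, ← mul_assoc]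
  · rw [norm_mul, norm_neg, norm_I, one_mul]
    calc _ ≤ c0⁻¹ / eps * ∫ x, ‖((deriv g x : ℝ) : ℂ)‖ :=
          norm_integral_mul_comp_add_mul_I_le hfC hg2.ofReal heps
      _ = (eps * c0)⁻¹ * ∫ x, |deriv g x| := by
          simp only [norm_real, Real.norm_eq_abs, div_eq_mul_inv, ← mul_inv, mul_comm c0]

/-- for `g ∈ C¹` with `g, g' ∈ L¹` and a unit vector `φ`, the function
`ε ↦ F(ε, δ)` is differentiable on `(0, ∞)` with `i·F'(ε) = ∫ g'(λ) ⟨φ, K(λ,ε,δ) φ⟩ dλ`,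
so that `|F'(ε)| ≤ (ε c0)⁻¹ ‖g'‖₁`. -/
theorem Fval_hasDerivAt
    (m : ℕ) (hm : 1 ≤ m) (H0 V B : Matrix (Fin m) (Fin m) ℂ)
    (hH0 : H0.IsHermitian) (hV : V.IsHermitian) (hB : B.PosSemidef)
    (c0 : ℝ) (hc0 : 0 < c0) (hVB : (V - (c0 : ℂ) • (B * B)).PosSemidef)
    (g : ℝ → ℝ) (hg : ContDiff ℝ 1 g)
    (hg1 : Integrable g) (hg2 : Integrable (deriv g))
    (φ : Fin m → ℂ) (hφ : (∑ i, ‖φ i‖ ^ 2) = 1)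
    (E : ℝ) (del : ℝ) (hdel : 0 < del) :
    ∀ eps : ℝ, 0 < eps → ∃ F' : ℂ,
      HasDerivAt (fun e => Fval m H0 V B E g φ e del) F' eps ∧
      Complex.I * F' =
        ∫ lam : ℝ, ((deriv g lam : ℝ) : ℂ) * (star φ ⬝ᵥ (kMat m H0 V B E lam eps del).mulVec φ) ∧
      ‖F'‖ ≤ (eps * c0)⁻¹ * ∫ x, |deriv g x| :=
  Fval_hasDerivAt_general m H0 V B hH0 hB c0 hc0 hVB g hg hg1 hg2 φ hφ E del hdel

end
end
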